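/- Under conditions (I) and (II) with h_n = ∑_{k=1}^n (1 - F_k(b_n)) → ∞, the ratio ∑_{k=1}^n (μ_k(b_n) - μ_0(b_n))² / ∑_{k=1}^n Var(X_k(b_n)) → 0 as n → ∞, where μ_0(b_n) = n^{-1}∑_{k=1}^n μ_k(b_n). -/

import Mathlib

/-!
Write `p_k = 1 - F_k(b_n)`. By (II) with `r = 1, 2`, the truncated means are of order
`μ_k ≍ b_n p_k` while the truncated second moments are of order `E[X_k(b_n)²] ≍ b_n² p_k`,
uniformly in `k` because `α_k` stays away from `1`. Hence `μ_k² ≲ p_k E[X_k(b_n)²]`, and by (I)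
the squared means are a vanishing fraction of the second moments: they are negligible both in
the variances `E[X_k(b_n)²] - μ_k²` and, since centring at `μ_0` only decreases a sum of
squares, in the numerator.
-/

open Filter Topology MeasureTheory ProbabilityTheory Finset

lemma sum_sq_sub_mean_le_sum_sq (n : ℕ) (x : ℕ → ℝ) :
    ∑ k ∈ range n, (x k - (∑ j ∈ range n, x j) / n) ^ 2 ≤ ∑ k ∈ range n, x k ^ 2 := by
  rcases n.eq_zero_or_pos with rfl | hn
  · simp
  set S := ∑ j ∈ range n, x j
  have hexpand : ∑ k ∈ range n, (x k - S / n) ^ 2 = ∑ k ∈ range n, x k ^ 2 - S ^ 2 / n := by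
    simp_rw [sub_sq, sum_add_distrib, sum_sub_distrib, ← sum_mul, ← mul_sum, sum_const,
      card_range, nsmul_eq_mul]
    field_simp
    ring
  rw [hexpand]
  linarith [show 0 ≤ S ^ 2 / n by positivity]

lemma sum_sq_sub_mean_div_sum_sub_sq_le (n : ℕ) (m Q : ℕ → ℝ) {c : ℝ} (hc0 : 0 ≤ c)
    (hc : c ≤ 1 / 2) (h : ∀ k < n, m k ^ 2 ≤ c * Q k) :
    (∑ k ∈ range n, (m k - (∑ j ∈ range n, m j) / n) ^ 2) / ∑ k ∈ range n, (Q k - m k ^ 2)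
      ≤ 2 * c := by
  have hnum := sum_sq_sub_mean_le_sum_sq n m
  have hnum0 : 0 ≤ ∑ k ∈ range n, (m k - (∑ j ∈ range n, m j) / n) ^ 2 :=
    sum_nonneg fun _ _ => sq_nonneg _
  have hsq0 : 0 ≤ ∑ k ∈ range n, m k ^ 2 := sum_nonneg fun _ _ => sq_nonneg _
  have hsq : ∑ k ∈ range n, m k ^ 2 ≤ c * ∑ k ∈ range n, Q k := by
    rw [mul_sum]
    exact sum_le_sum fun k hk => h k (mem_range.1 hk)
  rcases lt_or_ge (∑ k ∈ range n, (Q k - m k ^ 2)) 0 with hD | hD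
  · exact (div_nonpos_of_nonneg_of_nonpos hnum0 hD.le).trans (by positivity)
  refine div_le_of_le_mul₀ hD (by positivity) ?_
  rw [sum_sub_distrib]
  nlinarith [mul_le_mul_of_nonneg_right hc hsq0]

lemma exists_forall_inv_one_sub_le {u : ℕ → ℝ} {a : ℝ} (hu : Tendsto u atTop (𝓝 a))
    (ha : a < 1) : ∃ M, ∀ k, (1 - u k)⁻¹ ≤ M := by
  obtain ⟨M, hM⟩ :=
    ((tendsto_const_nhds.sub hu).inv₀ (sub_ne_zero.2 ha.ne')).bddAbove_range
  exact ⟨M, fun k => hM ⟨k, rfl⟩⟩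

lemma sq_div_one_sub_le {a M : ℝ} (ha0 : 0 ≤ a) (ha1 : a < 1) (hM : (1 - a)⁻¹ ≤ M) :
    (a / (1 - a)) ^ 2 ≤ 2 * M ^ 2 * (a / (2 - a)) := by
  have hle : a / (1 - a) ≤ a * M := mul_le_mul_of_nonneg_left hM ha0
  have hhalf : a / 2 ≤ a / (2 - a) := div_le_div_of_nonneg_left ha0 (by linarith) (by linarith)
  calc (a / (1 - a)) ^ 2 ≤ (a * M) ^ 2 :=
        pow_le_pow_left₀ (div_nonneg ha0 (by linarith)) hle 2
    _ = a * (a * M ^ 2) := by ring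
    _ ≤ 1 * (a * M ^ 2) := by gcongr
    _ = 2 * M ^ 2 * (a / 2) := by ring
    _ ≤ 2 * M ^ 2 * (a / (2 - a)) := by gcongr

lemma sq_le_of_abs_sub_le_half {m Q d₁ d₂ b p K ε : ℝ}
    (hm : |m - d₁ * b * p| ≤ 1 / 2 * (d₁ * b * p))
    (hQ : |Q - d₂ * b ^ 2 * p| ≤ 1 / 2 * (d₂ * b ^ 2 * p))
    (hd : d₁ ^ 2 ≤ K * d₂) (hK : 0 ≤ K) (hp : p ≤ ε) (hε : 0 ≤ ε) :
    m ^ 2 ≤ 9 / 2 * K * ε * Q := by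
  have hm0 : 0 ≤ m := by linarith [(abs_le.1 hm).1, abs_nonneg (m - d₁ * b * p)]
  have hQ2 : d₂ * b ^ 2 * p ≤ 2 * Q := by linarith [(abs_le.1 hQ).1]
  have hK2 : 0 ≤ K * (d₂ * b ^ 2 * p) :=
    mul_nonneg hK (by linarith [abs_nonneg (Q - d₂ * b ^ 2 * p)])
  calc m ^ 2 ≤ (3 / 2 * (d₁ * b * p)) ^ 2 :=
        pow_le_pow_left₀ hm0 (by linarith [(abs_le.1 hm).2]) 2
    _ = 9 / 4 * d₁ ^ 2 * (b * p) ^ 2 := by ring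
    _ ≤ 9 / 4 * (K * d₂) * (b * p) ^ 2 := by gcongr
    _ = 9 / 4 * (K * (d₂ * b ^ 2 * p)) * p := by ring
    _ ≤ 9 / 4 * (K * (d₂ * b ^ 2 * p)) * ε := by gcongr
    _ ≤ 9 / 4 * (K * (2 * Q)) * ε := by gcongr
    _ = 9 / 2 * K * ε * Q := by ring

lemma memLp_ite_le {Ω : Type*} [MeasurableSpace Ω] {μ : Measure Ω} [IsFiniteMeasure μ]
    {Y : Ω → ℝ} (hY : Measurable Y) (hY0 : ∀ ω, 0 ≤ Y ω) (b : ℝ) (q : ENNReal) :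
    MemLp (fun ω => if Y ω ≤ b then Y ω else 0) q μ := by
  refine MemLp.of_bound
    (hY.ite (measurableSet_le hY measurable_const) measurable_const).aestronglyMeasurable |b|
    (ae_of_all _ fun ω => ?_)
  split_ifs with h
  · rw [Real.norm_of_nonneg (hY0 ω)]
    exact h.trans (le_abs_self b)
  · simp

lemma integral_sub_integral_sq {Ω : Type*} [MeasurableSpace Ω] {μ : Measure Ω}
    [IsProbabilityMeasure μ] {Y : Ω → ℝ} (hY : MemLp Y 2 μ) :
    ∫ ω, (Y ω - ∫ ω', Y ω' ∂μ) ^ 2 ∂μ = ∫ ω, Y ω ^ 2 ∂μ - (∫ ω, Y ω ∂μ) ^ 2 := by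
  rw [← variance_eq_integral hY.aemeasurable, variance_eq_sub hY]
  rfl

theorem mean_spread_over_variance_tendsto_zero_general
    {Ω : Type*} [MeasurableSpace Ω] (μ : Measure Ω) [IsProbabilityMeasure μ]
    (X : ℕ → Ω → ℝ) (hX : ∀ k, Measurable (X k)) (hXnonneg : ∀ k ω, 0 ≤ X k ω)
    (αs : ℕ → ℝ) (α : ℝ) (hαs : ∀ k, 0 < αs k ∧ αs k < 1)
    (hα : 0 < α ∧ α < 1) (hαlim : Tendsto αs atTop (nhds α))
    (b : ℕ → ℝ)
    (F : ℕ → ℝ → ℝ)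
    -- condition (I)
    (hI : ∀ ε > 0, ∃ N, ∀ n ≥ N, ∀ k < n, 1 - F k (b n) < ε)
    -- condition (II)
    (hII : ∀ r : ℝ, 1 ≤ r →
      (∀ ε > 0, ∃ N, ∀ n ≥ N, ∀ k < n,
        |(∫ ω, (if X k ω ≤ b n then X k ω else 0) ^ r ∂μ)
            - (αs k / (r - αs k)) * b n ^ r * (1 - F k (b n))|
          ≤ ε * ((αs k / (r - αs k)) * b n ^ r * (1 - F k (b n))))
      ∧ (∀ M : ℝ, ∃ N, ∀ n ≥ N, ∀ k < n,
          M ≤ ∫ ω, (if X k ω ≤ b n then X k ω else 0) ^ r ∂μ)) :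
    let T : ℕ → ℕ → Ω → ℝ := fun n k ω => if X k ω ≤ b n then X k ω else 0
    let m : ℕ → ℕ → ℝ := fun n k => ∫ ω, T n k ω ∂μ
    let m0 : ℕ → ℝ := fun n => (∑ k ∈ Finset.range n, m n k) / n
    Tendsto (fun n =>
      (∑ k ∈ Finset.range n, (m n k - m0 n) ^ 2)
        / (∑ k ∈ Finset.range n, ∫ ω, (T n k ω - m n k) ^ 2 ∂μ)) atTop (nhds 0) := by
  intro T m m0
  obtain ⟨M, hM⟩ := exists_forall_inv_one_sub_le hαlim hα.2
  have hM0 : 0 < M := (inv_pos.2 (sub_pos.2 (hαs 0).2)).trans_le (hM 0)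
  have hK : 0 < 2 * M ^ 2 := by positivity
  have hsmall : ∀ c > 0, ∀ᶠ n in atTop, ∀ k < n, m n k ^ 2 ≤ c * ∫ ω, T n k ω ^ 2 ∂μ := by
    intro c hc
    obtain ⟨N₀, h₀⟩ := hI (2 * c / (9 * (2 * M ^ 2))) (by positivity)
    obtain ⟨N₁, h₁⟩ := (hII 1 le_rfl).1 (1 / 2) (by norm_num)
    obtain ⟨N₂, h₂⟩ := (hII 2 one_le_two).1 (1 / 2) (by norm_num)
    filter_upwards [eventually_ge_atTop (max N₀ (max N₁ N₂))] with n hn k hk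
    have hmean := h₁ n (by omega) k hk
    have hsecond := h₂ n (by omega) k hk
    simp only [Real.rpow_one, Real.rpow_two] at hmean hsecond
    refine (sq_le_of_abs_sub_le_half hmean hsecond (sq_div_one_sub_le (hαs k).1.le (hαs k).2 (hM k))
      hK.le (h₀ n (by omega) k hk).le (by positivity)).trans_eq ?_
    field_simp
    rfl
  have hvar : ∀ n k, ∫ ω, (T n k ω - m n k) ^ 2 ∂μ = ∫ ω, T n k ω ^ 2 ∂μ - m n k ^ 2 :=
    fun n k => integral_sub_integral_sq (memLp_ite_le (hX k) (hXnonneg k) (b n) 2)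
  have hnonneg : ∀ n, 0 ≤ (∑ k ∈ range n, (m n k - m0 n) ^ 2)
      / ∑ k ∈ range n, ∫ ω, (T n k ω - m n k) ^ 2 ∂μ := fun n =>
    div_nonneg (sum_nonneg fun _ _ => sq_nonneg _)
      (sum_nonneg fun _ _ => integral_nonneg fun _ => sq_nonneg _)
  refine tendsto_order.2 ⟨fun a ha => .of_forall fun n => ha.trans_le (hnonneg n), fun η hη => ?_⟩
  have hc : 0 < min (η / 4) (1 / 2) := by positivity
  filter_upwards [hsmall _ hc] with n hn
  simp only [hvar]
  calc _ ≤ 2 * min (η / 4) (1 / 2) :=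
        sum_sq_sub_mean_div_sum_sub_sq_le n (m n) _ hc.le (min_le_right _ _) hn
    _ < η := by linarith [min_le_left (η / 4) (1 / 2)]

/-- under conditions (I) and (II), if `h_n = ∑_{k<n}(1-F_k(b_n)) → ∞`,
then `∑ (μ_k(b_n) - μ_0(b_n))² / ∑ Var(X_k(b_n)) → 0`. -/
theorem mean_spread_over_variance_tendsto_zero
    {Ω : Type*} [MeasurableSpace Ω] (μ : Measure Ω) [IsProbabilityMeasure μ]
    (X : ℕ → Ω → ℝ) (hX : ∀ k, Measurable (X k)) (hXnonneg : ∀ k ω, 0 ≤ X k ω)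
    (αs : ℕ → ℝ) (α : ℝ) (hαs : ∀ k, 0 < αs k ∧ αs k < 1)
    (hα : 0 < α ∧ α < 1) (hαlim : Tendsto αs atTop (nhds α))
    (b : ℕ → ℝ) (hbpos : ∀ n, 0 < b n) (hb : Tendsto b atTop atTop)
    (F : ℕ → ℝ → ℝ) (hF : ∀ k x, F k x = (μ {ω | X k ω ≤ x}).toReal)
    -- condition (I)
    (hI : ∀ ε > 0, ∃ N, ∀ n ≥ N, ∀ k < n, 1 - F k (b n) < ε)
    -- condition (II)
    (hII : ∀ r : ℝ, 1 ≤ r →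
      (∀ ε > 0, ∃ N, ∀ n ≥ N, ∀ k < n,
        |(∫ ω, (if X k ω ≤ b n then X k ω else 0) ^ r ∂μ)
            - (αs k / (r - αs k)) * b n ^ r * (1 - F k (b n))|
          ≤ ε * ((αs k / (r - αs k)) * b n ^ r * (1 - F k (b n))))
      ∧ (∀ M : ℝ, ∃ N, ∀ n ≥ N, ∀ k < n,
          M ≤ ∫ ω, (if X k ω ≤ b n then X k ω else 0) ^ r ∂μ))
    (hh : Tendsto (fun n => ∑ k ∈ Finset.range n, (1 - F k (b n))) atTop atTop) :
    let T : ℕ → ℕ → Ω → ℝ := fun n k ω => if X k ω ≤ b n then X k ω else 0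
    let m : ℕ → ℕ → ℝ := fun n k => ∫ ω, T n k ω ∂μ
    let m0 : ℕ → ℝ := fun n => (∑ k ∈ Finset.range n, m n k) / n
    Tendsto (fun n =>
      (∑ k ∈ Finset.range n, (m n k - m0 n) ^ 2)
        / (∑ k ∈ Finset.range n, ∫ ω, (T n k ω - m n k) ^ 2 ∂μ)) atTop (nhds 0) :=
  mean_spread_over_variance_tendsto_zero_general μ X hX hXnonneg αs α hαs hα hαlim b F hI hII
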